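/- Perturbation bound (Frobenius norm): With A, B, B_r, 𝒜, ℬ_r as above and ‖B − A‖ < σ_r(A), one has (1/√2)·‖P_𝒜 − P_{ℬ_r}‖_F = ‖P_{𝒜⊥} P_{ℬ_r}‖_F ≤ ‖P_{𝒜⊥} B‖_F / (σ_r(A) − ‖B − A‖) ≤ ‖B − A‖_F / (σ_r(A) − ‖B − A‖). -/

import Mathlib

open Matrix

/-- Spectral (operator) norm of a real matrix. -/
noncomputable def spec {n m : ℕ} (M : Matrix (Fin n) (Fin m) ℝ) : ℝ :=
  ‖LinearMap.toContinuousLinearMap (Matrix.toEuclideanLin M)‖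

/-- Column span of a matrix, as a subspace of Euclidean space. -/
noncomputable def colSpan {n m : ℕ} (M : Matrix (Fin n) (Fin m) ℝ) :
    Submodule ℝ (EuclideanSpace ℝ (Fin n)) :=
  LinearMap.range (Matrix.toEuclideanLin M)

/-- The matrix of the orthogonal projection onto a subspace of ℝⁿ. -/
noncomputable def projMat {n : ℕ} (K : Submodule ℝ (EuclideanSpace ℝ (Fin n))) :
    Matrix (Fin n) (Fin n) ℝ :=
  Matrix.toEuclideanLin.symm ((K.subtypeL.comp K.orthogonalProjection).toLinearMap)

/-- Frobenius norm of a real matrix. -/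
noncomputable def frob {n m : ℕ} (M : Matrix (Fin n) (Fin m) ℝ) : ℝ :=
  Real.sqrt (∑ i, ∑ j, (M i j) ^ 2)

open Matrix

/-- pseudo-diagonal rectangular matrix -/
def pdm (n m : ℕ) (f : ℕ → ℝ) : Matrix (Fin n) (Fin m) ℝ :=
  Matrix.of fun i j => if (i : ℕ) = (j : ℕ) then f i else 0

lemma pdm_apply {n m : ℕ} (f : ℕ → ℝ) (i : Fin n) (j : Fin m) :
    pdm n m f i j = if (i : ℕ) = (j : ℕ) then f i else 0 := rfl

lemma pdm_mul {n m k : ℕ} (f g : ℕ → ℝ) (h : ∀ i, m ≤ i → f i * g i = 0) :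
    pdm n m f * pdm m k g = pdm n k (fun i => f i * g i) := by
  ext i j
  simp only [Matrix.mul_apply, pdm_apply]
  by_cases him : (i : ℕ) < m
  · rw [Finset.sum_eq_single (⟨(i : ℕ), him⟩ : Fin m)]
    · simp only []
      by_cases hij : (i : ℕ) = (j : ℕ) <;> simp [hij]
    · intro b _ hb
      have : ¬ ((i : ℕ) = (b : ℕ)) := by
        intro hc; apply hb; exact Fin.ext hc.symm
      simp [this]
    · simp
  · have h0 : ∀ b : Fin m, (if (i:ℕ) = (b:ℕ) then f i else 0) * (if (b:ℕ) = (j:ℕ) then g b else 0) = 0 := by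
      intro b
      have : ¬ ((i : ℕ) = (b : ℕ)) := by
        intro hc; exact him (hc ▸ b.isLt)
      simp [this]
    rw [Finset.sum_congr rfl (fun b _ => h0 b), Finset.sum_const_zero]
    split_ifs with hij
    · exact (h i (le_of_not_gt him)).symm
    · rfl

lemma pdm_congr {n m : ℕ} (f g : ℕ → ℝ) (h : ∀ i, i < n → i < m → f i = g i) :
    pdm n m f = pdm n m g := by
  ext i j
  simp only [pdm_apply]
  by_cases hij : (i : ℕ) = (j : ℕ)
  · rw [if_pos hij, if_pos hij, h i i.isLt (hij ▸ j.isLt)]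
  · rw [if_neg hij, if_neg hij]

lemma pdm_transpose {n m : ℕ} (f : ℕ → ℝ) : (pdm n m f)ᵀ = pdm m n f := by
  ext i j
  simp only [Matrix.transpose_apply, pdm_apply]
  by_cases hij : (i : ℕ) = (j : ℕ)
  · rw [if_pos hij.symm, if_pos hij, hij]
  · rw [if_neg (fun h => hij h.symm), if_neg hij]

lemma trace_pdm {n : ℕ} (f : ℕ → ℝ) : Matrix.trace (pdm n n f) = ∑ i : Fin n, f i := by
  simp [Matrix.trace, Matrix.diag, pdm_apply]

lemma sum_ind {n r : ℕ} (hrn : r ≤ n) :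
    (∑ i : Fin n, (if (i : ℕ) < r then (1 : ℝ) else 0)) = r := by
  rw [Fin.sum_univ_eq_sum_range (fun i => if i < r then (1:ℝ) else 0) n]
  rw [← Finset.sum_subset (Finset.range_subset_range.2 hrn) (by intro x _ hx; simp at hx; simp [hx])]
  rw [Finset.sum_ite_of_true (fun x hx => Finset.mem_range.1 hx)]
  simp
open Matrix

-- sum juggling
lemma sum_fin_le_sum_fin {k m : ℕ} (b : ℕ → ℝ) (hb : ∀ l, 0 ≤ b l)
    (hbm : ∀ l, m ≤ l → b l = 0) : (∑ j : Fin k, b j) ≤ ∑ l : Fin m, b l := by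
  rw [Fin.sum_univ_eq_sum_range b k, Fin.sum_univ_eq_sum_range b m]
  calc ∑ j ∈ Finset.range k, b j ≤ ∑ j ∈ Finset.range (max k m), b j :=
        Finset.sum_le_sum_of_subset_of_nonneg (Finset.range_subset_range.2 (le_max_left _ _))
          (fun i _ _ => hb i)
    _ = ∑ j ∈ Finset.range m, b j := by
        refine (Finset.sum_subset (Finset.range_subset_range.2 (le_max_right _ _)) ?_).symm
        intro x _ hx
        exact hbm x (le_of_not_gt (fun hc => hx (Finset.mem_range.2 hc)))

lemma sum_fin_eq_sum_fin {k m : ℕ} (hmk : m ≤ k) (b : ℕ → ℝ)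
    (hbm : ∀ l, m ≤ l → b l = 0) : (∑ j : Fin k, b j) = ∑ l : Fin m, b l := by
  rw [Fin.sum_univ_eq_sum_range b k, Fin.sum_univ_eq_sum_range b m]
  refine (Finset.sum_subset (Finset.range_subset_range.2 hmk) ?_).symm
  intro x _ hx
  exact hbm x (le_of_not_gt (fun hc => hx (Finset.mem_range.2 hc)))

/-- squared Frobenius norm -/
noncomputable def msq {n m : ℕ} (M : Matrix (Fin n) (Fin m) ℝ) : ℝ :=
  ∑ i, ∑ j, (M i j) ^ 2

lemma msq_nonneg {n m : ℕ} (M : Matrix (Fin n) (Fin m) ℝ) : 0 ≤ msq M :=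
  Finset.sum_nonneg fun i _ => Finset.sum_nonneg fun j _ => sq_nonneg _

lemma msq_eq_trace {n m : ℕ} (M : Matrix (Fin n) (Fin m) ℝ) :
    msq M = Matrix.trace (Mᵀ * M) := by
  simp only [msq, Matrix.trace, Matrix.diag, Matrix.mul_apply, Matrix.transpose_apply]
  rw [Finset.sum_comm]
  congr 1; ext i; congr 1; ext j; ring

lemma trace_transpose_mul {n m : ℕ} (X Y : Matrix (Fin n) (Fin m) ℝ) :
    Matrix.trace (Yᵀ * X) = Matrix.trace (Xᵀ * Y) := by
  rw [← Matrix.trace_transpose (Yᵀ * X), Matrix.transpose_mul, Matrix.transpose_transpose]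

lemma msq_pythag {n m : ℕ} (X Y : Matrix (Fin n) (Fin m) ℝ)
    (h : Matrix.trace (Xᵀ * Y) = 0) : msq (X + Y) = msq X + msq Y := by
  rw [msq_eq_trace, msq_eq_trace, msq_eq_trace, Matrix.transpose_add, Matrix.add_mul,
    Matrix.mul_add, Matrix.mul_add, Matrix.trace_add, Matrix.trace_add, Matrix.trace_add,
    trace_transpose_mul X Y, h]
  ring

-- vector squared norm
noncomputable def vsq {d : ℕ} (x : Fin d → ℝ) : ℝ := ∑ i, (x i) ^ 2

lemma vsq_nonneg {d : ℕ} (x : Fin d → ℝ) : 0 ≤ vsq x :=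
  Finset.sum_nonneg fun i _ => sq_nonneg _

lemma vsq_pos {d : ℕ} (x : Fin d → ℝ) (hx : x ≠ 0) : 0 < vsq x := by
  rcases (vsq_nonneg x).lt_or_eq with h | h
  · exact h
  · exfalso; apply hx
    funext i
    have := (Finset.sum_eq_zero_iff_of_nonneg (fun j _ => sq_nonneg (x j))).1 h.symm i
      (Finset.mem_univ i)
    exact pow_eq_zero_iff (n := 2) (by norm_num) |>.1 this

lemma vsq_eq_dot {d : ℕ} (x : Fin d → ℝ) : vsq x = x ⬝ᵥ x := by
  simp [vsq, dotProduct, sq]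

lemma vsq_mulVec_orth {n m : ℕ} (O : Matrix (Fin n) (Fin m) ℝ) (hO : Oᵀ * O = 1)
    (x : Fin m → ℝ) : vsq (O *ᵥ x) = vsq x := by
  rw [vsq_eq_dot, vsq_eq_dot, Matrix.dotProduct_mulVec]
  congr 1
  rw [← Matrix.mulVec_transpose O (O *ᵥ x), Matrix.mulVec_mulVec, hO, Matrix.one_mulVec]

lemma msq_mul_orth_right {n m k : ℕ} (M : Matrix (Fin n) (Fin m) ℝ)
    (W : Matrix (Fin m) (Fin k) ℝ) (hW : W * Wᵀ = 1) : msq (M * W) = msq M := by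
  rw [msq_eq_trace, msq_eq_trace, Matrix.transpose_mul, Matrix.mul_assoc Wᵀ Mᵀ (M * W),
    Matrix.trace_mul_comm, ← Matrix.mul_assoc Mᵀ M W, Matrix.mul_assoc (Mᵀ * M) W Wᵀ, hW,
    Matrix.mul_one]

/-- extension of a Fin-vector by zero -/
noncomputable def extz {m : ℕ} (c : Fin m → ℝ) : ℕ → ℝ :=
  fun l => if h : l < m then c ⟨l, h⟩ else 0

lemma extz_coe {m : ℕ} (c : Fin m → ℝ) (j : Fin m) : extz c (j : ℕ) = c j := by
  simp [extz, j.isLt]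

lemma pdm_mulVec {n m : ℕ} (f : ℕ → ℝ) (c : Fin m → ℝ) (i : Fin n) :
    (pdm n m f *ᵥ c) i = f i * extz c i := by
  simp only [Matrix.mulVec, dotProduct, pdm_apply]
  by_cases him : (i : ℕ) < m
  · rw [Finset.sum_eq_single (⟨(i : ℕ), him⟩ : Fin m)]
    · simp [extz, him]
    · intro b _ hb
      have : ¬ ((i : ℕ) = (b : ℕ)) := fun hc => hb (Fin.ext hc.symm)
      simp [this]
    · simp
  · rw [Finset.sum_eq_zero, extz, dif_neg him, mul_zero]
    intro b _
    have : ¬ ((i : ℕ) = (b : ℕ)) := fun hc => him (hc ▸ b.isLt)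
    simp [this]

lemma mul_pdm_apply {n m k : ℕ} (N : Matrix (Fin n) (Fin m) ℝ) (f : ℕ → ℝ)
    (i : Fin n) (j : Fin k) : (N * pdm m k f) i j = extz (N i) j * f j := by
  simp only [Matrix.mul_apply, pdm_apply]
  by_cases hjm : (j : ℕ) < m
  · rw [Finset.sum_eq_single (⟨(j : ℕ), hjm⟩ : Fin m)]
    · simp [extz, hjm]
    · intro b _ hb
      have : ¬ ((b : ℕ) = (j : ℕ)) := fun hc => hb (Fin.ext hc)
      simp [this]
    · simp
  · rw [Finset.sum_eq_zero, extz, dif_neg hjm, zero_mul]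
    intro b _
    have : ¬ ((b : ℕ) = (j : ℕ)) := fun hc => hjm (hc ▸ b.isLt)
    simp [this]

lemma msq_mul_pdm_le {n m k : ℕ} (N : Matrix (Fin n) (Fin m) ℝ) (f : ℕ → ℝ) (c : ℝ)
    (hf : ∀ l, f l ^ 2 ≤ c ^ 2) : msq (N * pdm m k f) ≤ c ^ 2 * msq N := by
  unfold msq
  rw [Finset.mul_sum]
  apply Finset.sum_le_sum
  intro i _
  calc (∑ j : Fin k, ((N * pdm m k f) i j) ^ 2)
      = ∑ j : Fin k, (fun l => (extz (N i) l * f l) ^ 2) (j : ℕ) := by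
        apply Finset.sum_congr rfl; intro j _; rw [mul_pdm_apply]
    _ ≤ ∑ j : Fin k, (fun l => c ^ 2 * (extz (N i) l) ^ 2) (j : ℕ) := by
        apply Finset.sum_le_sum; intro j _
        simp only [mul_pow]
        calc extz (N i) ↑j ^ 2 * f ↑j ^ 2 ≤ extz (N i) ↑j ^ 2 * c ^ 2 := by
              exact mul_le_mul_of_nonneg_left (hf _) (sq_nonneg _)
          _ = c ^ 2 * extz (N i) ↑j ^ 2 := by ring
    _ ≤ ∑ l : Fin m, (fun l => c ^ 2 * (extz (N i) l) ^ 2) (l : ℕ) :=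
        sum_fin_le_sum_fin (fun l => c ^ 2 * (extz (N i) l) ^ 2)
          (fun l => by positivity) (fun l hl => by simp [extz, dif_neg (not_lt.2 hl)])
    _ = c ^ 2 * ∑ j : Fin m, (N i j) ^ 2 := by
        rw [← Finset.mul_sum]
        congr 1
        apply Finset.sum_congr rfl; intro j _; rw [extz_coe]

lemma frob_eq_sqrt_msq {n m : ℕ} (M : Matrix (Fin n) (Fin m) ℝ) :
    frob M = Real.sqrt (msq M) := rfl

lemma frob_mono {n m n' m' : ℕ} {M : Matrix (Fin n) (Fin m) ℝ}
    {N : Matrix (Fin n') (Fin m') ℝ} (h : msq M ≤ msq N) : frob M ≤ frob N :=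
  Real.sqrt_le_sqrt h

lemma inner_eq_dot {d : ℕ} (x y : EuclideanSpace ℝ (Fin d)) :
    (inner ℝ x y : ℝ) = (WithLp.equiv 2 (Fin d → ℝ) x) ⬝ᵥ (WithLp.equiv 2 (Fin d → ℝ) y) := by
  simp [PiLp.inner_apply, dotProduct, RCLike.inner_apply, mul_comm]

lemma norm_eq_sqrt_vsq {d : ℕ} (x : EuclideanSpace ℝ (Fin d)) :
    ‖x‖ = Real.sqrt (vsq (WithLp.equiv 2 (Fin d → ℝ) x)) := by
  rw [EuclideanSpace.norm_eq]
  congr 1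
  simp [vsq, Real.norm_eq_abs, sq_abs]

lemma toEuclideanLin_one' {d : ℕ} (x : EuclideanSpace ℝ (Fin d)) :
    Matrix.toEuclideanLin (1 : Matrix (Fin d) (Fin d) ℝ) x = x := by
  rw [Matrix.toEuclideanLin_apply, Matrix.one_mulVec]

lemma projMat_eq {d : ℕ} (K : Submodule ℝ (EuclideanSpace ℝ (Fin d)))
    (P : Matrix (Fin d) (Fin d) ℝ)
    (h1 : ∀ x, Matrix.toEuclideanLin P x ∈ K)
    (h2 : ∀ x, x - Matrix.toEuclideanLin P x ∈ Kᗮ) : projMat K = P := by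
  unfold projMat
  rw [LinearEquiv.symm_apply_eq]
  refine LinearMap.ext fun x => ?_
  have := Submodule.eq_starProjection_of_mem_orthogonal (h1 x) (h2 x)
  exact this

lemma projMat_orthogonal {d : ℕ} (K : Submodule ℝ (EuclideanSpace ℝ (Fin d)))
    (P : Matrix (Fin d) (Fin d) ℝ)
    (h1 : ∀ x, Matrix.toEuclideanLin P x ∈ K)
    (h2 : ∀ x, x - Matrix.toEuclideanLin P x ∈ Kᗮ) : projMat Kᗮ = 1 - P := by
  apply projMat_eq
  · intro x
    rw [map_sub]
    simp only [LinearMap.sub_apply, toEuclideanLin_one']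
    exact h2 x
  · intro x
    rw [map_sub]
    simp only [LinearMap.sub_apply, toEuclideanLin_one', sub_sub_cancel]
    exact Submodule.le_orthogonal_orthogonal K (h1 x)

lemma spec_bound {n m : ℕ} (M : Matrix (Fin n) (Fin m) ℝ) (x : EuclideanSpace ℝ (Fin m)) :
    ‖Matrix.toEuclideanLin M x‖ ≤ spec M * ‖x‖ := by
  have := (LinearMap.toContinuousLinearMap (Matrix.toEuclideanLin M)).le_opNorm x
  simpa [spec] using this

lemma spec_nonneg {n m : ℕ} (M : Matrix (Fin n) (Fin m) ℝ) : 0 ≤ spec M := norm_nonneg _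

lemma spec_neg_sub {n m : ℕ} (M N : Matrix (Fin n) (Fin m) ℝ) : spec (M - N) = spec (N - M) := by
  unfold spec
  rw [show M - N = -(N - M) from (neg_sub N M).symm, map_neg, map_neg, norm_neg]

lemma vsq_pdm_lower {n m r : ℕ} (hrn : r ≤ n) (hrm : r ≤ m)
    (t : ℕ → ℝ) (ht_mono : ∀ i j : ℕ, i ≤ j → t j ≤ t i) (ht_nonneg : ∀ i, 0 ≤ t i)
    (c : Fin m → ℝ) (hcsupp : ∀ l : Fin m, r ≤ (l : ℕ) → c l = 0) :
    t (r - 1) ^ 2 * vsq c ≤ vsq (pdm n m t *ᵥ c) := by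
  have hext0 : ∀ l : ℕ, r ≤ l → extz c l = 0 := by
    intro l hl
    by_cases hlm : l < m
    · rw [extz, dif_pos hlm]; exact hcsupp _ hl
    · rw [extz, dif_neg hlm]
  have e1 := sum_fin_eq_sum_fin (k := n) hrn (fun l => (t l * extz c l) ^ 2)
    (fun l hl => by simp only [hext0 l hl, mul_zero]; ring)
  have e2 := sum_fin_eq_sum_fin (k := m) hrm (fun l => (extz c l) ^ 2)
    (fun l hl => by simp only [hext0 l hl]; ring)
  have h1 : vsq (pdm n m t *ᵥ c) = ∑ i : Fin r, (t (i : ℕ) * extz c (i : ℕ)) ^ 2 := by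
    rw [vsq, Finset.sum_congr rfl fun (i : Fin n) _ => by rw [pdm_mulVec]]
    simpa using e1
  have h2 : vsq c = ∑ i : Fin r, (extz c (i : ℕ)) ^ 2 := by
    rw [vsq, Finset.sum_congr rfl fun (i : Fin m) _ => (by rw [extz_coe] :
      (c i) ^ 2 = (extz c (i : ℕ)) ^ 2)]
    simpa using e2
  rw [h1, h2, Finset.mul_sum]
  apply Finset.sum_le_sum
  intro i _
  rw [mul_pow]
  apply mul_le_mul_of_nonneg_right _ (sq_nonneg _)
  exact pow_le_pow_left₀ (ht_nonneg _) (ht_mono _ _ (Nat.le_sub_one_of_lt i.isLt)) 2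

lemma vsq_pdm_upper {n m r : ℕ}
    (s : ℕ → ℝ) (hs_mono : ∀ i j : ℕ, i ≤ j → s j ≤ s i) (hs_nonneg : ∀ i, 0 ≤ s i)
    (w : Fin m → ℝ) (hw : ∀ l : Fin m, (l : ℕ) < r - 1 → w l = 0) :
    vsq (pdm n m s *ᵥ w) ≤ s (r - 1) ^ 2 * vsq w := by
  have key : ∀ l : ℕ, (s l * extz w l) ^ 2 ≤ s (r - 1) ^ 2 * (extz w l) ^ 2 := by
    intro l
    by_cases hlr : l < r - 1
    · have : extz w l = 0 := by
        by_cases hlm : l < m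
        · rw [extz, dif_pos hlm]; exact hw _ hlr
        · rw [extz, dif_neg hlm]
      rw [this, mul_zero]; simp
    · have h1 : s l ≤ s (r - 1) := hs_mono _ _ (le_of_not_gt hlr)
      rw [mul_pow]
      exact mul_le_mul_of_nonneg_right (pow_le_pow_left₀ (hs_nonneg _) h1 2) (sq_nonneg _)
  have step1 : vsq (pdm n m s *ᵥ w)
      ≤ ∑ i : Fin n, (fun l => s (r - 1) ^ 2 * (extz w l) ^ 2) (i : ℕ) := by
    rw [vsq]
    exact Finset.sum_le_sum fun i _ => by rw [pdm_mulVec]; exact key _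
  have step2 := sum_fin_le_sum_fin (k := n) (m := m)
    (fun l => s (r - 1) ^ 2 * (extz w l) ^ 2)
    (fun l => by positivity)
    (fun l hl => by
      show s (r - 1) ^ 2 * (extz w l) ^ 2 = 0
      rw [extz, dif_neg (not_lt.2 hl)]; ring)
  have step3 : (∑ l : Fin m, (fun l => s (r - 1) ^ 2 * (extz w l) ^ 2) (l : ℕ))
      = s (r - 1) ^ 2 * vsq w := by
    rw [vsq, Finset.mul_sum]
    exact Finset.sum_congr rfl fun l _ => by
      show s (r - 1) ^ 2 * (extz w (l : ℕ)) ^ 2 = _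
      rw [extz_coe]
  calc vsq (pdm n m s *ᵥ w) ≤ _ := step1
    _ ≤ _ := step2
    _ = _ := step3

lemma kernel_vec {m r : ℕ} (hr : 0 < r) (hrm : r ≤ m) (W : Matrix (Fin m) (Fin m) ℝ) :
    ∃ c : Fin m → ℝ, c ≠ 0 ∧ (∀ l : Fin m, r ≤ (l : ℕ) → c l = 0) ∧
      (∀ j : Fin m, (j : ℕ) < r - 1 → (W *ᵥ c) j = 0) := by
  set M : Matrix (Fin r) (Fin r) ℝ := Matrix.of fun i j =>
    if (i : ℕ) < r - 1 then W (Fin.castLE hrm i) (Fin.castLE hrm j) else 0 with hM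
  have hdet : M.det = 0 := by
    apply Matrix.det_eq_zero_of_row_eq_zero (⟨r - 1, Nat.sub_lt hr Nat.one_pos⟩ : Fin r)
    intro j
    show (if (r - 1 : ℕ) < r - 1 then _ else 0) = 0
    rw [if_neg (lt_irrefl _)]
  obtain ⟨c0, hc0ne, hc0⟩ := (Matrix.exists_mulVec_eq_zero_iff).2 hdet
  refine ⟨fun j => if h : (j : ℕ) < r then c0 ⟨j, h⟩ else 0, ?_, ?_, ?_⟩
  · obtain ⟨i, hi⟩ := Function.ne_iff.1 hc0ne
    apply Function.ne_iff.2
    refine ⟨Fin.castLE hrm i, ?_⟩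
    have hlt : ((Fin.castLE hrm i : Fin m) : ℕ) < r := i.isLt
    simp only [dif_pos hlt]
    simpa using hi
  · intro l hl
    simp only [dif_neg (not_lt.2 hl)]
  · intro j hj
    have jr : (j : ℕ) < r := lt_of_lt_of_le hj (Nat.sub_le r 1)
    set c : Fin m → ℝ := fun j => if h : (j : ℕ) < r then c0 ⟨j, h⟩ else 0 with hc
    show (W *ᵥ c) j = 0
    have hb : ∀ l : Fin m, W j l * c l
        = (fun l : ℕ => if h : l < m then W j ⟨l, h⟩ * c ⟨l, h⟩ else 0) (l : ℕ) := by
      intro l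
      simp only [dif_pos l.isLt]
    have hsum : (W *ᵥ c) j = ∑ l : Fin r,
        (fun l : ℕ => if h : l < m then W j ⟨l, h⟩ * c ⟨l, h⟩ else 0) (l : ℕ) := by
      rw [Matrix.mulVec, dotProduct, Finset.sum_congr rfl fun l _ => hb l]
      refine sum_fin_eq_sum_fin hrm
        (fun l : ℕ => if h : l < m then W j ⟨l, h⟩ * c ⟨l, h⟩ else 0) ?_
      intro l hl
      show (if h : l < m then W j ⟨l, h⟩ * c ⟨l, h⟩ else 0) = 0
      by_cases hlm : l < m
      · rw [dif_pos hlm]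
        have : c ⟨l, hlm⟩ = 0 := by simp only [hc, dif_neg (not_lt.2 hl)]
        rw [this, mul_zero]
      · rw [dif_neg hlm]
    have hterm : ∀ l : Fin r,
        (fun l : ℕ => if h : l < m then W j ⟨l, h⟩ * c ⟨l, h⟩ else 0) (l : ℕ)
        = M ⟨j, jr⟩ l * c0 l := by
      intro l
      have hlm : (l : ℕ) < m := lt_of_lt_of_le l.isLt hrm
      simp only [dif_pos hlm]
      have h2 : c ⟨(l : ℕ), hlm⟩ = c0 l := by
        simp only [hc, dif_pos l.isLt, Fin.eta]
      have h3 : M ⟨j, jr⟩ l = W j (Fin.castLE hrm l) := by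
        show (if (j : ℕ) < r - 1 then W (Fin.castLE hrm ⟨j, jr⟩) (Fin.castLE hrm l) else 0) = _
        rw [if_pos hj]
        congr 1
      rw [h2, h3]
      rfl
    rw [hsum, Finset.sum_congr rfl fun l _ => hterm l]
    have := congrFun hc0 ⟨j, jr⟩
    simpa [Matrix.mulVec, dotProduct] using this

lemma norm_symm_eq {d : ℕ} (x : Fin d → ℝ) :
    ‖(WithLp.equiv 2 (Fin d → ℝ)).symm x‖ = Real.sqrt (vsq x) := by
  rw [norm_eq_sqrt_vsq, Equiv.apply_symm_apply]

lemma weyl_ineq {n m r : ℕ} (hr : 0 < r) (hrn : r ≤ n) (hrm : r ≤ m)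
    (A B : Matrix (Fin n) (Fin m) ℝ)
    (UA : Matrix (Fin n) (Fin n) ℝ) (VA : Matrix (Fin m) (Fin m) ℝ) (t : ℕ → ℝ)
    (hUA : UAᵀ * UA = 1) (hVA : VAᵀ * VA = 1)
    (ht_mono : ∀ i j : ℕ, i ≤ j → t j ≤ t i) (ht_nonneg : ∀ i, 0 ≤ t i)
    (hA : A = UA * pdm n m t * VAᵀ)
    (U : Matrix (Fin n) (Fin n) ℝ) (V : Matrix (Fin m) (Fin m) ℝ) (s : ℕ → ℝ)
    (hU : Uᵀ * U = 1) (hV : Vᵀ * V = 1)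
    (hs_mono : ∀ i j : ℕ, i ≤ j → s j ≤ s i) (hs_nonneg : ∀ i, 0 ≤ s i)
    (hB : B = U * pdm n m s * Vᵀ) :
    t (r - 1) ≤ s (r - 1) + spec (B - A) := by
  obtain ⟨c, hcne, hcsupp, hcker⟩ := kernel_vec hr hrm (Vᵀ * VA)
  set v : Fin m → ℝ := VA *ᵥ c with hv
  set w : Fin m → ℝ := Vᵀ *ᵥ v with hw
  have hVVt : V * Vᵀ = 1 := mul_eq_one_comm.1 hV
  have hwv : w = (Vᵀ * VA) *ᵥ c := by rw [hw, hv, Matrix.mulVec_mulVec]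
  have hwzero : ∀ l : Fin m, (l : ℕ) < r - 1 → w l = 0 := by
    intro l hl; rw [hwv]; exact hcker l hl
  have hvsqv : vsq v = vsq c := vsq_mulVec_orth VA hVA c
  have hvsqw : vsq w = vsq v := by
    rw [hw]
    exact vsq_mulVec_orth Vᵀ (by rw [Matrix.transpose_transpose, hVVt]) v
  have hvpos : 0 < vsq v := by rw [hvsqv]; exact vsq_pos c hcne
  -- A action
  have hAv : A *ᵥ v = UA *ᵥ (pdm n m t *ᵥ c) := by
    rw [hA, hv, Matrix.mulVec_mulVec, Matrix.mulVec_mulVec, Matrix.mul_assoc,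
      Matrix.mul_assoc, hVA, Matrix.mul_one]
  have hAlow : t (r - 1) ^ 2 * vsq v ≤ vsq (A *ᵥ v) := by
    rw [hAv, vsq_mulVec_orth UA hUA, hvsqv]
    exact vsq_pdm_lower hrn hrm t ht_mono ht_nonneg c hcsupp
  have hBv : B *ᵥ v = U *ᵥ (pdm n m s *ᵥ w) := by
    rw [hwv, hB, hv]
    simp only [Matrix.mulVec_mulVec, Matrix.mul_assoc]
  have hBup : vsq (B *ᵥ v) ≤ s (r - 1) ^ 2 * vsq v := by
    rw [hBv, vsq_mulVec_orth U hU, ← hvsqw]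
    exact vsq_pdm_upper s hs_mono hs_nonneg w hwzero
  -- translate to norms
  set ve : EuclideanSpace ℝ (Fin m) := (WithLp.equiv 2 (Fin m → ℝ)).symm v with hve
  set α : ℝ := Real.sqrt (vsq v) with hα
  have hαpos : 0 < α := Real.sqrt_pos.2 hvpos
  have hveα : ‖ve‖ = α := norm_symm_eq v
  have hnA : ‖Matrix.toEuclideanLin A ve‖ = Real.sqrt (vsq (A *ᵥ v)) := by
    rw [hve, ← norm_symm_eq]; rfl
  have hnB : ‖Matrix.toEuclideanLin B ve‖ = Real.sqrt (vsq (B *ᵥ v)) := by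
    rw [hve, ← norm_symm_eq]; rfl
  have h1 : t (r - 1) * α ≤ ‖Matrix.toEuclideanLin A ve‖ := by
    rw [hnA]
    calc t (r - 1) * α = Real.sqrt (t (r - 1) ^ 2 * vsq v) := by
          rw [Real.sqrt_mul (sq_nonneg _), Real.sqrt_sq (ht_nonneg _)]
      _ ≤ Real.sqrt (vsq (A *ᵥ v)) := Real.sqrt_le_sqrt hAlow
  have h2 : ‖Matrix.toEuclideanLin B ve‖ ≤ s (r - 1) * α := by
    rw [hnB]
    calc Real.sqrt (vsq (B *ᵥ v)) ≤ Real.sqrt (s (r - 1) ^ 2 * vsq v) :=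
          Real.sqrt_le_sqrt hBup
      _ = s (r - 1) * α := by rw [Real.sqrt_mul (sq_nonneg _), Real.sqrt_sq (hs_nonneg _)]
  have h3 : ‖Matrix.toEuclideanLin A ve - Matrix.toEuclideanLin B ve‖
      ≤ spec (B - A) * α := by
    have : Matrix.toEuclideanLin A ve - Matrix.toEuclideanLin B ve
        = Matrix.toEuclideanLin (A - B) ve := by
      rw [map_sub]; rfl
    rw [this, spec_neg_sub B A, ← hveα]
    exact spec_bound (A - B) ve
  have htri : ‖Matrix.toEuclideanLin A ve‖ ≤ ‖Matrix.toEuclideanLin B ve‖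
      + ‖Matrix.toEuclideanLin A ve - Matrix.toEuclideanLin B ve‖ := by
    calc ‖Matrix.toEuclideanLin A ve‖
        = ‖Matrix.toEuclideanLin B ve + (Matrix.toEuclideanLin A ve
            - Matrix.toEuclideanLin B ve)‖ := by rw [add_sub_cancel]
      _ ≤ _ := norm_add_le _ _
  have hfinal : t (r - 1) * α ≤ (s (r - 1) + spec (B - A)) * α := by
    calc t (r - 1) * α ≤ _ := h1
      _ ≤ _ := htri
      _ ≤ s (r - 1) * α + spec (B - A) * α := add_le_add h2 h3
      _ = (s (r - 1) + spec (B - A)) * α := by ring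
  exact le_of_mul_le_mul_right hfinal hαpos

lemma toEuclideanLin_mul_apply {a b c : ℕ} (M : Matrix (Fin a) (Fin b) ℝ)
    (N : Matrix (Fin b) (Fin c) ℝ) (x : EuclideanSpace ℝ (Fin c)) :
    Matrix.toEuclideanLin (M * N) x = Matrix.toEuclideanLin M (Matrix.toEuclideanLin N x) := by
  simp [Matrix.toEuclideanLin_apply, Equiv.apply_symm_apply, Matrix.mulVec_mulVec]

lemma proj_colSpan {n m : ℕ} (Mx : Matrix (Fin n) (Fin m) ℝ) (P : Matrix (Fin n) (Fin n) ℝ)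
    (Pinv : Matrix (Fin m) (Fin n) ℝ) (h1 : Mx * Pinv = P) (h2 : Mxᵀ * P = Mxᵀ) :
    projMat (colSpan Mx) = P ∧ projMat (colSpan Mx)ᗮ = 1 - P := by
  have mem1 : ∀ x : EuclideanSpace ℝ (Fin n), Matrix.toEuclideanLin P x ∈ colSpan Mx := by
    intro x
    refine ⟨Matrix.toEuclideanLin Pinv x, ?_⟩
    rw [← toEuclideanLin_mul_apply, h1]
  have mem2 : ∀ x : EuclideanSpace ℝ (Fin n), x - Matrix.toEuclideanLin P x ∈ (colSpan Mx)ᗮ := by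
    intro x
    rw [Submodule.mem_orthogonal]
    rintro u ⟨y, rfl⟩
    rw [inner_eq_dot]
    have hz : WithLp.equiv 2 (Fin n → ℝ) (x - Matrix.toEuclideanLin P x)
        = WithLp.equiv 2 (Fin n → ℝ) x - P *ᵥ (WithLp.equiv 2 (Fin n → ℝ) x) := by
      rfl
    rw [hz, show WithLp.equiv 2 (Fin n → ℝ) (Matrix.toEuclideanLin Mx y)
      = Mx *ᵥ WithLp.equiv 2 (Fin m → ℝ) y from rfl]
    rw [dotProduct_comm, Matrix.dotProduct_mulVec, ← Matrix.mulVec_transpose]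
    have hzero : Mxᵀ *ᵥ (WithLp.equiv 2 (Fin n → ℝ) x
        - P *ᵥ (WithLp.equiv 2 (Fin n → ℝ) x)) = 0 := by
      rw [Matrix.mulVec_sub, Matrix.mulVec_mulVec, h2, sub_self]
    rw [hzero, zero_dotProduct]
  exact ⟨projMat_eq _ _ mem1 mem2, projMat_orthogonal _ _ mem1 mem2⟩

lemma pdm_sub {n m : ℕ} (f g : ℕ → ℝ) :
    pdm n m f - pdm n m g = pdm n m (fun i => f i - g i) := by
  ext i j
  by_cases h : (i : ℕ) = (j : ℕ) <;>
    simp [Matrix.sub_apply, pdm_apply, h]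

lemma pdm_zero {n m : ℕ} (f : ℕ → ℝ) (hf : ∀ i, i < n → f i = 0) : pdm n m f = 0 := by
  ext i j
  by_cases h : (i : ℕ) = (j : ℕ)
  · simp only [pdm_apply, if_pos h, Matrix.zero_apply, ← h, hf i i.isLt, ite_self]
  · simp [pdm_apply, h]

lemma sandwich_transpose {d k : ℕ} (O : Matrix (Fin d) (Fin k) ℝ) (f : ℕ → ℝ) :
    (O * pdm k k f * Oᵀ)ᵀ = O * pdm k k f * Oᵀ := by
  rw [Matrix.transpose_mul, Matrix.transpose_mul, Matrix.transpose_transpose, pdm_transpose,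
    Matrix.mul_assoc]

lemma sandwich_mul {d k : ℕ} (O : Matrix (Fin d) (Fin k) ℝ) (hO : Oᵀ * O = 1) (f g : ℕ → ℝ)
    (h : ∀ i, k ≤ i → f i * g i = 0) :
    (O * pdm k k f * Oᵀ) * (O * pdm k k g * Oᵀ) = O * pdm k k (fun i => f i * g i) * Oᵀ := by
  simp only [Matrix.mul_assoc]
  rw [← Matrix.mul_assoc Oᵀ O, hO, Matrix.one_mul,
    ← Matrix.mul_assoc (pdm k k f) (pdm k k g), pdm_mul f g h]

lemma trace_sandwich {d k : ℕ} (O : Matrix (Fin d) (Fin k) ℝ) (hO : Oᵀ * O = 1) (f : ℕ → ℝ) :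
    Matrix.trace (O * pdm k k f * Oᵀ) = ∑ i : Fin k, f i := by
  rw [Matrix.trace_mul_comm, ← Matrix.mul_assoc, hO, Matrix.one_mul, trace_pdm]

/-- indicator of `i < r` -/
def indf (r : ℕ) : ℕ → ℝ := fun i => if i < r then 1 else 0

/-- truncation of a sequence -/
def truncf (r : ℕ) (s : ℕ → ℝ) : ℕ → ℝ := fun i => if i < r then s i else 0

/-- truncated inverses -/
noncomputable def invf (r : ℕ) (s : ℕ → ℝ) : ℕ → ℝ := fun i => if i < r then (s i)⁻¹ else 0

/-- Perturbation bound (Frobenius norm).  `A` is a rank-r matrix given via its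
SVD `A = UA·ΣA·VAᵀ` (singular values `t`, nonincreasing and nonnegative, exactly
the first `r` of which are nonzero, so `σ_r(A) = t (r−1)` is the smallest
nonzero singular value of `A`).  `B` is given via its SVD `B = U·Σ·Vᵀ`
(singular values `s`), and `Br = U·Σ_r·Vᵀ` is the rank-r truncation of `B`.
If `‖B − A‖ < σ_r(A)` then
`(1/√2)·‖P_𝒜 − P_{ℬ_r}‖_F = ‖P_{𝒜⊥} P_{ℬ_r}‖_F
  ≤ ‖P_{𝒜⊥} B‖_F/(σ_r(A) − ‖B − A‖) ≤ ‖B − A‖_F/(σ_r(A) − ‖B − A‖)`. -/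
theorem perturbation_bound_frobenius {n m r : ℕ} (hr : 0 < r) (hrn : r ≤ n) (hrm : r ≤ m)
    (A B : Matrix (Fin n) (Fin m) ℝ)
    -- SVD of A with rank exactly r
    (UA : Matrix (Fin n) (Fin n) ℝ) (VA : Matrix (Fin m) (Fin m) ℝ) (t : ℕ → ℝ)
    (hUA : UAᵀ * UA = 1) (hVA : VAᵀ * VA = 1)
    (ht_mono : ∀ i j : ℕ, i ≤ j → t j ≤ t i) (ht_nonneg : ∀ i, 0 ≤ t i)
    (ht_rank : ∀ k : ℕ, k < min n m → (0 < t k ↔ k < r))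
    (hA : A = UA * Matrix.of (fun (i : Fin n) (j : Fin m) =>
      if (i : ℕ) = (j : ℕ) then t i else 0) * VAᵀ)
    -- SVD of B
    (U : Matrix (Fin n) (Fin n) ℝ) (V : Matrix (Fin m) (Fin m) ℝ) (s : ℕ → ℝ)
    (hU : Uᵀ * U = 1) (hV : Vᵀ * V = 1)
    (hs_mono : ∀ i j : ℕ, i ≤ j → s j ≤ s i) (hs_nonneg : ∀ i, 0 ≤ s i)
    (hB : B = U * Matrix.of (fun (i : Fin n) (j : Fin m) =>
      if (i : ℕ) = (j : ℕ) then s i else 0) * Vᵀ)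
    -- the rank-r truncation of B
    (Br : Matrix (Fin n) (Fin m) ℝ)
    (hBr : Br = U * Matrix.of (fun (i : Fin n) (j : Fin m) =>
      if (i : ℕ) = (j : ℕ) ∧ (i : ℕ) < r then s i else 0) * Vᵀ)
    -- the perturbation is smaller than the smallest nonzero singular value of A
    (hgap : spec (B - A) < t (r - 1)) :
    (1 / Real.sqrt 2) * frob (projMat (colSpan A) - projMat (colSpan Br))
        = frob (projMat (colSpan A)ᗮ * projMat (colSpan Br)) ∧
      frob (projMat (colSpan A)ᗮ * projMat (colSpan Br))
        ≤ frob (projMat (colSpan A)ᗮ * B) / (t (r - 1) - spec (B - A)) ∧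
      frob (projMat (colSpan A)ᗮ * B) / (t (r - 1) - spec (B - A))
        ≤ frob (B - A) / (t (r - 1) - spec (B - A)) := by
    classical
  have hspec0 : 0 ≤ spec (B - A) := spec_nonneg _
  have hgpos : 0 < t (r - 1) - spec (B - A) := sub_pos.2 hgap
  have hA' : A = UA * pdm n m t * VAᵀ := hA
  have hB' : B = U * pdm n m s * Vᵀ := hB
  have hBr' : Br = U * pdm n m (truncf r s) * Vᵀ := by
    rw [hBr]
    have : (Matrix.of (fun (i : Fin n) (j : Fin m) =>
        if (i : ℕ) = (j : ℕ) ∧ (i : ℕ) < r then s i else 0)) = pdm n m (truncf r s) := by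
      ext i j
      show (if (i : ℕ) = (j : ℕ) ∧ (i : ℕ) < r then s (i : ℕ) else 0)
          = (if (i : ℕ) = (j : ℕ) then truncf r s (i : ℕ) else 0)
      by_cases h1 : (i : ℕ) = (j : ℕ) <;> by_cases h2 : (i : ℕ) < r <;>
        simp [truncf, h1, h2]
    rw [this]
  -- Weyl inequality and consequences
  have hW : t (r - 1) ≤ s (r - 1) + spec (B - A) :=
    weyl_ineq hr hrn hrm A B UA VA t hUA hVA ht_mono ht_nonneg hA'
      U V s hU hV hs_mono hs_nonneg hB'
  have hgs : ∀ i : ℕ, i < r → t (r - 1) - spec (B - A) ≤ s i := by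
    intro i hi
    have h1 : s (r - 1) ≤ s i := hs_mono i (r - 1) (Nat.le_sub_one_of_lt hi)
    linarith
  have hspos : ∀ i : ℕ, i < r → 0 < s i := fun i hi => lt_of_lt_of_le hgpos (hgs i hi)
  have htpos : ∀ i : ℕ, i < r → 0 < t i := fun i hi =>
    (ht_rank i (lt_of_lt_of_le hi (le_min hrn hrm))).2 hi
  have htzero : ∀ i : ℕ, r ≤ i → i < min n m → t i = 0 := fun i h1 h2 =>
    le_antisymm (not_lt.1 fun hp => absurd ((ht_rank i h2).1 hp) (not_lt.2 h1)) (ht_nonneg i)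
  -- matrix identities
  have hI4 : A * (VA * pdm m n (invf r t) * UAᵀ) = UA * pdm n n (indf r) * UAᵀ := by
    rw [hA']
    simp only [Matrix.mul_assoc]
    rw [← Matrix.mul_assoc VAᵀ VA, hVA, Matrix.one_mul,
      ← Matrix.mul_assoc (pdm n m t) (pdm m n (invf r t)),
      pdm_mul t (invf r t) (fun i hi => by
        simp only [invf, if_neg (not_lt.2 (le_trans hrm hi)), mul_zero]),
      pdm_congr (fun i => t i * invf r t i) (indf r) (fun i _ _ => by
        by_cases h : i < r
        · simp only [invf, indf, if_pos h, if_pos h, mul_inv_cancel₀ (htpos i h).ne']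
        · simp only [invf, indf, if_neg h, if_neg h, mul_zero])]
  have hI5 : Aᵀ * (UA * pdm n n (indf r) * UAᵀ) = Aᵀ := by
    rw [hA']
    simp only [Matrix.transpose_mul, Matrix.transpose_transpose, pdm_transpose,
      Matrix.mul_assoc]
    rw [← Matrix.mul_assoc UAᵀ UA, hUA, Matrix.one_mul,
      ← Matrix.mul_assoc (pdm m n t) (pdm n n (indf r)),
      pdm_mul t (indf r) (fun i hi => by
        simp only [indf, if_neg (not_lt.2 (le_trans hrn hi)), mul_zero]),
      pdm_congr (fun i => t i * indf r i) t (fun i h1 h2 => by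
        by_cases h : i < r
        · simp only [indf, if_pos h, mul_one]
        · simp only [indf, if_neg h, mul_zero, htzero i (not_lt.1 h) (lt_min h2 h1)])]
  have hI6 : Br * (V * pdm m n (invf r s) * Uᵀ) = U * pdm n n (indf r) * Uᵀ := by
    rw [hBr']
    simp only [Matrix.mul_assoc]
    rw [← Matrix.mul_assoc Vᵀ V, hV, Matrix.one_mul,
      ← Matrix.mul_assoc (pdm n m (truncf r s)) (pdm m n (invf r s)),
      pdm_mul (truncf r s) (invf r s) (fun i hi => by
        simp only [invf, if_neg (not_lt.2 (le_trans hrm hi)), mul_zero]),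
      pdm_congr (fun i => truncf r s i * invf r s i) (indf r) (fun i _ _ => by
        by_cases h : i < r
        · simp only [truncf, invf, indf, if_pos h, if_pos h, if_pos h,
            mul_inv_cancel₀ (hspos i h).ne']
        · simp only [truncf, invf, indf, if_neg h, if_neg h, if_neg h, mul_zero])]
  have hI7 : Brᵀ * (U * pdm n n (indf r) * Uᵀ) = Brᵀ := by
    rw [hBr']
    simp only [Matrix.transpose_mul, Matrix.transpose_transpose, pdm_transpose,
      Matrix.mul_assoc]
    rw [← Matrix.mul_assoc Uᵀ U, hU, Matrix.one_mul,
      ← Matrix.mul_assoc (pdm m n (truncf r s)) (pdm n n (indf r)),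
      pdm_mul (truncf r s) (indf r) (fun i hi => by
        simp only [indf, if_neg (not_lt.2 (le_trans hrn hi)), mul_zero]),
      pdm_congr (fun i => truncf r s i * indf r i) (truncf r s) (fun i _ _ => by
        by_cases h : i < r
        · simp only [indf, if_pos h, mul_one]
        · simp only [truncf, indf, if_neg h, if_neg h, zero_mul])]
  have hI8 : (B - Br) * Brᵀ = 0 := by
    have hsub : B - Br = U * pdm n m (fun i => s i - truncf r s i) * Vᵀ := by
      rw [hB', hBr', ← Matrix.sub_mul, ← Matrix.mul_sub, pdm_sub]
    rw [hsub, hBr']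
    simp only [Matrix.transpose_mul, Matrix.transpose_transpose, pdm_transpose,
      Matrix.mul_assoc]
    rw [← Matrix.mul_assoc Vᵀ V, hV, Matrix.one_mul,
      ← Matrix.mul_assoc (pdm n m fun i => s i - truncf r s i) (pdm m n (truncf r s)),
      pdm_mul _ (truncf r s) (fun i hi => by
        simp only [truncf, if_neg (not_lt.2 (le_trans hrm hi)), mul_zero]),
      pdm_zero _ (fun i _ => by
        by_cases h : i < r
        · simp only [truncf, if_pos h, sub_self, zero_mul]
        · simp only [truncf, if_neg h, mul_zero]),
      Matrix.zero_mul, Matrix.mul_zero]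
  have hI9 : (UA * pdm n n (indf r) * UAᵀ) * A = A := by
    rw [hA']
    simp only [Matrix.mul_assoc]
    rw [← Matrix.mul_assoc UAᵀ UA, hUA, Matrix.one_mul,
      ← Matrix.mul_assoc (pdm n n (indf r)) (pdm n m t),
      pdm_mul (indf r) t (fun i hi => by
        simp only [indf, if_neg (not_lt.2 (le_trans hrn hi)), zero_mul]),
      pdm_congr (fun i => indf r i * t i) t (fun i h1 h2 => by
        by_cases h : i < r
        · simp only [indf, if_pos h, one_mul]
        · simp only [indf, if_neg h, zero_mul, htzero i (not_lt.1 h) (lt_min h1 h2)])]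
  -- projections
  obtain ⟨hPA, hPAperp⟩ := proj_colSpan A (UA * pdm n n (indf r) * UAᵀ)
    (VA * pdm m n (invf r t) * UAᵀ) hI4 hI5
  obtain ⟨hQ, -⟩ := proj_colSpan Br (U * pdm n n (indf r) * Uᵀ)
    (V * pdm m n (invf r s) * Uᵀ) hI6 hI7
  rw [hPA, hPAperp, hQ]
  set PA := UA * pdm n n (indf r) * UAᵀ with hPAdef
  set Q := U * pdm n n (indf r) * Uᵀ with hQdef
  have hPAs : PAᵀ = PA := sandwich_transpose UA (indf r)
  have hQs : Qᵀ = Q := sandwich_transpose U (indf r)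
  have hindmul : ∀ (k : ℕ), r ≤ k → ∀ i, k ≤ i → indf r i * indf r i = 0 := by
    intro k hk i hi
    simp only [indf, if_neg (not_lt.2 (le_trans hk hi)), mul_zero]
  have hindcongr : ∀ i, i < n → i < n → indf r i * indf r i = indf r i := by
    intro i _ _
    by_cases h : i < r
    · simp only [indf, if_pos h, mul_one]
    · simp only [indf, if_neg h, mul_zero]
  have hPA2 : PA * PA = PA := by
    rw [hPAdef, sandwich_mul UA hUA _ _ (hindmul n hrn),
      pdm_congr (fun i => indf r i * indf r i) (indf r) hindcongr]
  have hQ2 : Q * Q = Q := by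
    rw [hQdef, sandwich_mul U hU _ _ (hindmul n hrn),
      pdm_congr (fun i => indf r i * indf r i) (indf r) hindcongr]
  have htrPA : Matrix.trace PA = (r : ℝ) := by
    rw [hPAdef, trace_sandwich UA hUA]
    exact sum_ind hrn
  have htrQ : Matrix.trace Q = (r : ℝ) := by
    rw [hQdef, trace_sandwich U hU]
    exact sum_ind hrn
  have htrQPA : Matrix.trace (Q * PA) = Matrix.trace (PA * Q) := Matrix.trace_mul_comm Q PA
  have htrQPAQ : Matrix.trace ((Q * PA) * Q) = Matrix.trace (PA * Q) := by
    rw [Matrix.trace_mul_comm (Q * PA) Q, ← Matrix.mul_assoc, hQ2, htrQPA]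
  have h1s : ((1 : Matrix (Fin n) (Fin n) ℝ) - PA)ᵀ = 1 - PA := by
    rw [Matrix.transpose_sub, Matrix.transpose_one, hPAs]
  have hP1idem : ((1 : Matrix (Fin n) (Fin n) ℝ) - PA) * (1 - PA) = 1 - PA := by
    rw [Matrix.mul_sub, Matrix.mul_one, Matrix.sub_mul, Matrix.one_mul, hPA2, sub_self,
      sub_zero]
  -- part 1
  have hmsq1 : msq (PA - Q) = 2 * (r : ℝ) - 2 * Matrix.trace (PA * Q) := by
    rw [msq_eq_trace, Matrix.transpose_sub, hPAs, hQs, Matrix.sub_mul, Matrix.mul_sub,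
      Matrix.mul_sub, Matrix.trace_sub, Matrix.trace_sub, Matrix.trace_sub, hPA2, hQ2,
      htrPA, htrQ, htrQPA]
    ring
  have hmsq2 : msq ((1 - PA) * Q) = (r : ℝ) - Matrix.trace (PA * Q) := by
    rw [msq_eq_trace, Matrix.transpose_mul, h1s, hQs,
      Matrix.mul_assoc Q (1 - PA) ((1 - PA) * Q), ← Matrix.mul_assoc (1 - PA) (1 - PA) Q,
      hP1idem, Matrix.sub_mul (1 : Matrix (Fin n) (Fin n) ℝ) PA Q, Matrix.one_mul,
      Matrix.mul_sub Q Q ((PA) * Q), Matrix.trace_sub, hQ2, ← Matrix.mul_assoc Q PA Q,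
      htrQPAQ, htrQ]
  have hkey : msq (PA - Q) = 2 * msq ((1 - PA) * Q) := by rw [hmsq1, hmsq2]; ring
  have hfr : frob (PA - Q) = Real.sqrt 2 * frob ((1 - PA) * Q) := by
    rw [frob_eq_sqrt_msq, frob_eq_sqrt_msq, hkey, Real.sqrt_mul (by norm_num : (0:ℝ) ≤ 2)]
  have hsqrt2 : Real.sqrt 2 ≠ 0 := by positivity
  refine ⟨?_, ?_, ?_⟩
  · rw [hfr, ← mul_assoc, one_div, inv_mul_cancel₀ hsqrt2, one_mul]
  · -- part 2
    have hchain1 : (1 - PA) * Q = ((1 - PA) * Br) * (V * pdm m n (invf r s) * Uᵀ) := by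
      rw [Matrix.mul_assoc (1 - PA) Br (V * pdm m n (invf r s) * Uᵀ), hI6, hQdef]
    have hUU' : Uᵀ * Uᵀᵀ = 1 := by rw [Matrix.transpose_transpose, hU]
    have hVV' : V * Vᵀ = 1 := mul_eq_one_comm.1 hV
    have hf : ∀ l, invf r s l ^ 2 ≤ ((t (r - 1) - spec (B - A))⁻¹) ^ 2 := by
      intro l
      by_cases h : l < r
      · simp only [invf, if_pos h]
        exact pow_le_pow_left₀ (inv_nonneg.2 (hspos l h).le)
          (inv_anti₀ hgpos (hgs l h)) 2
      · simp only [invf, if_neg h, zero_pow two_ne_zero]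
        positivity
    have hb1 : msq ((1 - PA) * Q)
        ≤ ((t (r - 1) - spec (B - A))⁻¹) ^ 2 * msq ((1 - PA) * Br) := by
      rw [hchain1]
      have e1 : ((1 - PA) * Br) * (V * pdm m n (invf r s) * Uᵀ)
          = ((((1 - PA) * Br) * V) * pdm m n (invf r s)) * Uᵀ := by
        simp only [Matrix.mul_assoc]
      rw [e1, msq_mul_orth_right _ Uᵀ hUU']
      calc msq ((((1 - PA) * Br) * V) * pdm m n (invf r s))
          ≤ ((t (r - 1) - spec (B - A))⁻¹) ^ 2 * msq (((1 - PA) * Br) * V) :=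
            msq_mul_pdm_le _ _ _ hf
        _ = ((t (r - 1) - spec (B - A))⁻¹) ^ 2 * msq ((1 - PA) * Br) := by
            rw [msq_mul_orth_right _ V hVV']
    have hb2 : msq ((1 - PA) * Br) ≤ msq ((1 - PA) * B) := by
      have hsplit : (1 - PA) * B = (1 - PA) * Br + (1 - PA) * (B - Br) := by
        rw [← Matrix.mul_add, add_sub_cancel]
      have horth : Matrix.trace (((1 - PA) * Br)ᵀ * ((1 - PA) * (B - Br))) = 0 := by
        rw [Matrix.transpose_mul, h1s,
          Matrix.mul_assoc Brᵀ (1 - PA) ((1 - PA) * (B - Br)),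
          ← Matrix.mul_assoc (1 - PA) (1 - PA) (B - Br), hP1idem,
          ← Matrix.mul_assoc Brᵀ (1 - PA) (B - Br), Matrix.trace_mul_comm,
          ← Matrix.mul_assoc (B - Br) Brᵀ (1 - PA), hI8, Matrix.zero_mul,
          Matrix.trace_zero]
      rw [hsplit, msq_pythag _ _ horth]
      have := msq_nonneg ((1 - PA) * (B - Br))
      linarith
    have hcomb : msq ((1 - PA) * Q)
        ≤ ((t (r - 1) - spec (B - A))⁻¹) ^ 2 * msq ((1 - PA) * B) :=
      le_trans hb1 (mul_le_mul_of_nonneg_left hb2 (sq_nonneg _))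
    have : frob ((1 - PA) * Q)
        ≤ (t (r - 1) - spec (B - A))⁻¹ * frob ((1 - PA) * B) := by
      rw [frob_eq_sqrt_msq, frob_eq_sqrt_msq]
      calc Real.sqrt (msq ((1 - PA) * Q))
          ≤ Real.sqrt (((t (r - 1) - spec (B - A))⁻¹) ^ 2 * msq ((1 - PA) * B)) :=
            Real.sqrt_le_sqrt hcomb
        _ = (t (r - 1) - spec (B - A))⁻¹ * Real.sqrt (msq ((1 - PA) * B)) := by
            rw [Real.sqrt_mul (sq_nonneg _), Real.sqrt_sq (inv_nonneg.2 hgpos.le)]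
    rw [div_eq_inv_mul]
    exact this
  · -- part 3
    have hP1A : (1 - PA) * A = 0 := by
      rw [Matrix.sub_mul, Matrix.one_mul, hI9, sub_self]
    have hP1B : (1 - PA) * B = (1 - PA) * (B - A) := by
      rw [Matrix.mul_sub, hP1A, sub_zero]
    have hsplit : B - A = PA * (B - A) + (1 - PA) * (B - A) := by
      rw [← Matrix.add_mul, add_sub_cancel, Matrix.one_mul]
    have horth : Matrix.trace ((PA * (B - A))ᵀ * ((1 - PA) * (B - A))) = 0 := by
      have hz : PA * ((1 - PA) * (B - A)) = 0 := by
        rw [← Matrix.mul_assoc PA (1 - PA) (B - A), Matrix.mul_sub PA 1 PA,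
          Matrix.mul_one, hPA2, sub_self, Matrix.zero_mul]
      rw [Matrix.transpose_mul, Matrix.mul_assoc (B - A)ᵀ PAᵀ ((1 - PA) * (B - A)), hPAs,
        hz, Matrix.mul_zero, Matrix.trace_zero]
    have h3 : msq ((1 - PA) * (B - A)) ≤ msq (B - A) := by
      conv_rhs => rw [hsplit]
      rw [msq_pythag _ _ horth]
      have := msq_nonneg (PA * (B - A))
      linarith
    have hfb : frob ((1 - PA) * B) ≤ frob (B - A) := by
      rw [hP1B]
      exact frob_mono h3
    exact (div_le_div_iff_of_pos_right hgpos).2 hfb
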